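/- Let f : ℝⁿ → ℝ be L-smooth (gradient L-Lipschitz) and suppose f satisfies gradient dominance: there is λ > 0 with f(x) − f* ≤ (1/λ)‖∇f(x)‖² for all x, where f* = inf f. Then for gradient descent x' = x − η g with step size η ≤ 1/(4L), where g is any vector, f(x') − f* ≤ (1 − ηλ/4)(f(x) − f*) + (3η/4)‖g − ∇f(x)‖². -/

import Mathlib

/-!
The descent lemma bounds `f (x - η • g)` by the quadratic upper model at `x`. Writing
`-2 ⟪∇f x, g⟫ = ‖g - ∇f x‖² - ‖∇f x‖² - ‖g‖²` and using `η L ≤ 1` to absorb the quadratic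
term into `-‖g‖²`, one inexact step decreases `f` by at least `η/2 (‖∇f x‖² - ‖g - ∇f x‖²)`;
gradient dominance then turns `‖∇f x‖²` into `lam (f x - f*)`.
-/

open Set
open scoped InnerProductSpace

variable {E : Type*} [NormedAddCommGroup E] [InnerProductSpace ℝ E] [CompleteSpace E]
  {f : E → ℝ}

lemma hasDerivAt_comp_add_smul (hdiff : Differentiable ℝ f) (x v : E) (t : ℝ) :
    HasDerivAt (fun s : ℝ => f (x + s • v)) ⟪gradient f (x + t • v), v⟫_ℝ t := by
  have hline : HasDerivAt (fun s : ℝ => x + s • v) v t := by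
    simpa using ((hasDerivAt_id t).smul_const v).const_add x
  have h := (hdiff (x + t • v)).hasGradientAt.hasFDerivAt.comp_hasDerivAt t hline
  rwa [InnerProductSpace.toDual_apply_apply] at h

theorem descent_lemma {L : ℝ} (hdiff : Differentiable ℝ f)
    (hsmooth : ∀ x y, ‖gradient f x - gradient f y‖ ≤ L * ‖x - y‖) (x v : E) :
    f (x + v) ≤ f x + ⟪gradient f x, v⟫_ℝ + L / 2 * ‖v‖ ^ 2 := by
  -- the gap between `f` and its quadratic upper model is antitone along the ray `x + t • v`
  set φ : ℝ → ℝ := fun t => f (x + t • v) - t * ⟪gradient f x, v⟫_ℝ - L / 2 * t ^ 2 * ‖v‖ ^ 2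
  have hφ : ∀ t, HasDerivAt φ
      (⟪gradient f (x + t • v), v⟫_ℝ - ⟪gradient f x, v⟫_ℝ - L * t * ‖v‖ ^ 2) t := by
    intro t
    have hsq : HasDerivAt (fun s : ℝ => s ^ 2) (2 * t) t := by simpa using hasDerivAt_pow 2 t
    have hquad := (hsq.const_mul (L / 2)).mul_const (‖v‖ ^ 2)
    refine (((hasDerivAt_comp_add_smul hdiff x v t).sub
      ((hasDerivAt_id t).mul_const ⟪gradient f x, v⟫_ℝ)).sub hquad).congr_deriv ?_
    ring
  have hφ'_nonpos : ∀ t ∈ interior (Ici (0 : ℝ)),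
      ⟪gradient f (x + t • v), v⟫_ℝ - ⟪gradient f x, v⟫_ℝ - L * t * ‖v‖ ^ 2 ≤ 0 := by
    intro t ht
    rw [interior_Ici, mem_Ioi] at ht
    have hlip : ‖gradient f (x + t • v) - gradient f x‖ ≤ L * (t * ‖v‖) := by
      simpa [norm_smul, abs_of_pos ht] using hsmooth (x + t • v) x
    calc ⟪gradient f (x + t • v), v⟫_ℝ - ⟪gradient f x, v⟫_ℝ - L * t * ‖v‖ ^ 2
        = ⟪gradient f (x + t • v) - gradient f x, v⟫_ℝ - L * t * ‖v‖ ^ 2 := by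
          rw [inner_sub_left]
      _ ≤ ‖gradient f (x + t • v) - gradient f x‖ * ‖v‖ - L * t * ‖v‖ ^ 2 := by
          gcongr; exact real_inner_le_norm _ _
      _ ≤ L * (t * ‖v‖) * ‖v‖ - L * t * ‖v‖ ^ 2 := by gcongr
      _ = 0 := by ring
  have hanti : AntitoneOn φ (Ici 0) :=
    antitoneOn_of_hasDerivWithinAt_nonpos (convex_Ici 0)
      (fun t _ => (hφ t).continuousAt.continuousWithinAt)
      (fun t _ => (hφ t).hasDerivWithinAt) hφ'_nonpos
  have h10 : φ 1 ≤ φ 0 := hanti self_mem_Ici (mem_Ici.2 zero_le_one) zero_le_one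
  simp only [φ, one_smul, zero_smul, add_zero] at h10
  linarith

theorem inexact_gradient_step_le {L η : ℝ} (hdiff : Differentiable ℝ f)
    (hsmooth : ∀ x y, ‖gradient f x - gradient f y‖ ≤ L * ‖x - y‖)
    (hη : 0 ≤ η) (hηL : η * L ≤ 1) (x g : E) :
    f (x - η • g) ≤ f x - η / 2 * ‖gradient f x‖ ^ 2 + η / 2 * ‖g - gradient f x‖ ^ 2 := by
  have hdesc := descent_lemma hdiff hsmooth x (-(η • g))
  rw [← sub_eq_add_neg, inner_neg_right, inner_smul_right, norm_neg, norm_smul,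
    Real.norm_of_nonneg hη] at hdesc
  have hpolar : ‖g - gradient f x‖ ^ 2
      = ‖g‖ ^ 2 - 2 * ⟪gradient f x, g⟫_ℝ + ‖gradient f x‖ ^ 2 := by
    rw [norm_sub_sq_real, real_inner_comm]
  have hquad : L / 2 * (η * ‖g‖) ^ 2 ≤ η / 2 * ‖g‖ ^ 2 := by
    have := mul_le_mul_of_nonneg_right hηL (mul_nonneg hη (sq_nonneg ‖g‖))
    linarith
  linarith [congrArg (η / 2 * ·) hpolar]

theorem inexact_gd_step_pl_general {n : ℕ} (f : EuclideanSpace ℝ (Fin n) → ℝ)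
    (L lam η : ℝ) (hlam : 0 < lam)
    (hdiff : Differentiable ℝ f)
    (hsmooth : ∀ x y, ‖gradient f x - gradient f y‖ ≤ L * ‖x - y‖)
    (fstar : ℝ)
    (hdom : ∀ x, f x - fstar ≤ (1 / lam) * ‖gradient f x‖ ^ 2)
    (hη : 0 < η) (hη' : η ≤ 1 / (4 * L))
    (x g : EuclideanSpace ℝ (Fin n)) :
    f (x - η • g) - fstar
      ≤ (1 - η * lam / 4) * (f x - fstar) + (3 * η / 4) * ‖g - gradient f x‖ ^ 2 := by
  have hL : 0 < L := by
    have := hη.trans_le hη'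
    rw [one_div_pos] at this
    linarith
  have hηL : η * L ≤ 1 := by
    rw [le_div_iff₀ (by positivity)] at hη'
    linarith
  have hstep := inexact_gradient_step_le hdiff hsmooth hη.le hηL x g
  have hpl : lam * (f x - fstar) ≤ ‖gradient f x‖ ^ 2 := by
    have := hdom x
    rwa [one_div_mul_eq_div, le_div_iff₀ hlam, mul_comm] at this
  linarith [mul_le_mul_of_nonneg_left hpl hη.le, mul_nonneg hη.le (sq_nonneg ‖gradient f x‖),
    mul_nonneg hη.le (sq_nonneg ‖g - gradient f x‖)]

/-- One-step inexact gradient descent recursion under L-smoothness and gradient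
dominance (PL inequality). -/
theorem inexact_gd_step_pl {n : ℕ} (f : EuclideanSpace ℝ (Fin n) → ℝ)
    (L lam η : ℝ) (hL : 0 < L) (hlam : 0 < lam)
    (hdiff : Differentiable ℝ f)
    (hsmooth : ∀ x y, ‖gradient f x - gradient f y‖ ≤ L * ‖x - y‖)
    (fstar : ℝ) (hfstar : fstar = sInf (Set.range f))
    (hdom : ∀ x, f x - fstar ≤ (1 / lam) * ‖gradient f x‖ ^ 2)
    (hη : 0 < η) (hη' : η ≤ 1 / (4 * L))
    (x g : EuclideanSpace ℝ (Fin n)) :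
    f (x - η • g) - fstar
      ≤ (1 - η * lam / 4) * (f x - fstar) + (3 * η / 4) * ‖g - gradient f x‖ ^ 2 :=
  inexact_gd_step_pl_general f L lam η hlam hdiff hsmooth fstar hdom hη hη' x g
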